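/- arXiv:1110.4141 — 2 statements merged into one kernel-verified Lean document; each statement's English description precedes it below -/
import Mathlib

section
/- For every x with 0 < x < 1, one has 1/Γ(x) ≤ (x² + x)/(x² + 1) < 1; in particular 1/Γ(x) < 1 for all x ∈ (0,1). -/
/-!
Since `Γ(x) = Γ(x + 3) / (x (x + 1) (x + 2))`, it suffices that `(1 + x²)(2 + x) ≤ Γ(x + 3)`
on `[0, 1]`, with equality at both ends. As `log Γ` is convex, it lies above its tangent lines
at `3` and `4`, of slopes `3/2 - γ > 9/10` and `11/6 - γ < 191/150` since `14/25 < γ < 3/5`.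
Hence `Γ(x + 3) ≥ 2 exp (9x/10)`, enough on `[0, 1/2]`, and
`Γ(x + 3) ≥ 6 exp (191 (x - 1)/150)`, enough on `[1/2, 1]`; the cubic Taylor lower bound for
`exp`, valid on all of `ℝ`, turns both into polynomial inequalities.
-/

open Real Set
open scoped Nat

theorem ConvexOn.add_mul_sub_le_of_hasDerivAt {S : Set ℝ} {f : ℝ → ℝ} {x y f' : ℝ}
    (hf : ConvexOn ℝ S f) (hx : x ∈ S) (hy : y ∈ S) (hf' : HasDerivAt f f' x) :
    f x + f' * (y - x) ≤ f y := by
  rcases lt_trichotomy x y with hxy | rfl | hxy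
  · have := hf.le_slope_of_hasDerivAt hx hy hxy hf'
    rw [slope_def_field, le_div_iff₀ (sub_pos.mpr hxy)] at this
    linarith
  · simp
  · have := hf.slope_le_of_hasDerivAt hy hx hxy hf'
    rw [slope_def_field, div_le_iff₀ (sub_pos.mpr hxy)] at this
    linarith

namespace Real

theorem cubic_le_exp (x : ℝ) : 1 + x + x ^ 2 / 2 + x ^ 3 / 6 ≤ exp x := by
  rcases le_total 0 x with hx | hx
  · simpa [Finset.sum_range_succ, Nat.factorial] using sum_le_exp_of_nonneg hx 4
  · -- `g` increases on `(-∞, 0]`, so `g x ≤ g 0 = 1`.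
    let g : ℝ → ℝ := fun t ↦ (1 + t + t ^ 2 / 2 + t ^ 3 / 6) * exp (-t)
    have hg : ∀ t, HasDerivAt g (-(t ^ 3 / 6) * exp (-t)) t := fun t ↦ by
      refine (((((hasDerivAt_id' t).const_add 1).add ((hasDerivAt_pow 2 t).div_const 2)).add
        ((hasDerivAt_pow 3 t).div_const 6)).mul (hasDerivAt_neg t).exp).congr_deriv ?_
      simp only [Pi.add_apply]
      push_cast
      ring
    have hmono : MonotoneOn g (Iic 0) := by
      refine monotoneOn_of_deriv_nonneg (convex_Iic 0)
        (fun t _ ↦ (hg t).continuousAt.continuousWithinAt)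
        (fun t _ ↦ (hg t).differentiableAt.differentiableWithinAt) fun t ht ↦ ?_
      rw [interior_Iic] at ht
      rw [(hg t).deriv]
      have : t ^ 3 ≤ 0 := Odd.pow_nonpos (by decide) ht.le
      have := exp_pos (-t)
      nlinarith
    have := hmono (mem_Iic.mpr hx) (mem_Iic.mpr le_rfl) hx
    simp only [g, neg_zero, exp_zero] at this
    rw [exp_neg, ← div_eq_mul_inv, div_le_iff₀ (exp_pos x)] at this
    norm_num at this
    linarith

theorem fourteen_div_twentyFive_lt_eulerMascheroniConstant :
    14 / 25 < eulerMascheroniConstant := by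
  have hH : (4.0272 : ℝ) < harmonic 31 := by norm_num [harmonic, Finset.sum_range_succ]
  have hlog : log 32 < 5 * 0.6931471808 := by
    rw [show (32 : ℝ) = 2 ^ 5 by norm_num, log_pow]
    linarith [log_two_lt_d9]
  have h := eulerMascheroniSeq_lt_eulerMascheroniConstant 31
  rw [eulerMascheroniSeq] at h
  norm_num at h
  linarith

theorem eulerMascheroniConstant_lt_three_fifths : eulerMascheroniConstant < 3 / 5 := by
  have hH : (harmonic 32 : ℝ) < 4.0586 := by norm_num [harmonic, Finset.sum_range_succ]
  have hlog : 5 * 0.6931471803 < log 32 := by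
    rw [show (32 : ℝ) = 2 ^ 5 by norm_num, log_pow]
    linarith [log_two_gt_d9]
  have h := eulerMascheroniConstant_lt_eulerMascheroniSeq' 32
  rw [eulerMascheroniSeq'] at h
  norm_num at h
  linarith

theorem hasDerivAt_log_Gamma_nat (n : ℕ) :
    HasDerivAt (log ∘ Gamma) (harmonic n - eulerMascheroniConstant) (n + 1) := by
  have h := (hasDerivAt_Gamma_nat n).log (by rw [Gamma_nat_eq_factorial]; positivity)
  rw [Gamma_nat_eq_factorial, mul_div_cancel_left₀ _ (by positivity)] at h
  exact h.congr_deriv (add_comm _ _)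

theorem factorial_mul_exp_le_Gamma (n : ℕ) {x : ℝ} (hx : 0 < x) :
    n ! * exp ((harmonic n - eulerMascheroniConstant) * (x - (n + 1))) ≤ Gamma x := by
  have h := convexOn_log_Gamma.add_mul_sub_le_of_hasDerivAt (mem_Ioi.mpr (by positivity))
    (mem_Ioi.mpr hx) (hasDerivAt_log_Gamma_nat n)
  simp only [Function.comp_apply, Gamma_nat_eq_factorial] at h
  calc (n ! : ℝ) * exp ((harmonic n - eulerMascheroniConstant) * (x - (n + 1)))
      = exp (log n ! + (harmonic n - eulerMascheroniConstant) * (x - (n + 1))) := by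
        rw [exp_add, exp_log (by positivity)]
    _ ≤ exp (log (Gamma x)) := exp_le_exp.mpr h
    _ = Gamma x := exp_log (Gamma_pos_of_pos hx)

theorem two_mul_exp_le_Gamma_add_three {x : ℝ} (hx : 0 ≤ x) :
    2 * exp (9 / 10 * x) ≤ Gamma (x + 3) := by
  have h := factorial_mul_exp_le_Gamma 2 (x := x + 3) (by positivity)
  have hH : (harmonic 2 : ℝ) = 3 / 2 := by norm_num [harmonic, Finset.sum_range_succ]
  have hγ := eulerMascheroniConstant_lt_three_fifths
  norm_num [hH] at h
  refine le_trans (mul_le_mul_of_nonneg_left (exp_le_exp.mpr ?_) (by norm_num)) h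
  nlinarith

theorem six_mul_exp_le_Gamma_add_three {x : ℝ} (h0 : 0 < x + 3) (h1 : x ≤ 1) :
    6 * exp (191 / 150 * (x - 1)) ≤ Gamma (x + 3) := by
  have h := factorial_mul_exp_le_Gamma 3 h0
  have hH : (harmonic 3 : ℝ) = 11 / 6 := by norm_num [harmonic, Finset.sum_range_succ]
  have hγ := fourteen_div_twentyFive_lt_eulerMascheroniConstant
  norm_num [hH] at h
  refine le_trans (mul_le_mul_of_nonneg_left (exp_le_exp.mpr ?_) (by norm_num)) h
  nlinarith

theorem one_add_sq_mul_two_add_le_two_mul_exp {x : ℝ} (h0 : 0 ≤ x) (h1 : x ≤ 1 / 2) :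
    (1 + x ^ 2) * (2 + x) ≤ 2 * exp (9 / 10 * x) := by
  have := cubic_le_exp (9 / 10 * x)
  nlinarith [mul_nonneg h0 (mul_nonneg h0 (sub_nonneg.mpr h1)), mul_nonneg h0 (sub_nonneg.mpr h1)]

theorem one_add_sq_mul_two_add_le_six_mul_exp {x : ℝ} (h0 : 1 / 2 ≤ x) (h1 : x ≤ 1) :
    (1 + x ^ 2) * (2 + x) ≤ 6 * exp (191 / 150 * (x - 1)) := by
  have := cubic_le_exp (191 / 150 * (x - 1))
  nlinarith [mul_nonneg (sub_nonneg.mpr h1) (mul_nonneg (sub_nonneg.mpr h1) (sub_nonneg.mpr h0)),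
    mul_nonneg (sub_nonneg.mpr h1) (sub_nonneg.mpr h0)]

theorem one_add_sq_mul_two_add_le_Gamma_add_three {x : ℝ} (h0 : 0 ≤ x) (h1 : x ≤ 1) :
    (1 + x ^ 2) * (2 + x) ≤ Gamma (x + 3) := by
  rcases le_total x (1 / 2) with hx | hx
  · exact (one_add_sq_mul_two_add_le_two_mul_exp h0 hx).trans (two_mul_exp_le_Gamma_add_three h0)
  · exact (one_add_sq_mul_two_add_le_six_mul_exp hx h1).trans
      (six_mul_exp_le_Gamma_add_three (by linarith) h1)

theorem sq_add_one_div_le_Gamma_add_one {x : ℝ} (h0 : 0 ≤ x) (h1 : x ≤ 1) :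
    (x ^ 2 + 1) / (x + 1) ≤ Gamma (x + 1) := by
  have h := one_add_sq_mul_two_add_le_Gamma_add_three h0 h1
  rw [show x + 3 = x + 1 + 1 + 1 by ring, Gamma_add_one (by positivity),
    Gamma_add_one (by positivity)] at h
  rw [div_le_iff₀ (by positivity)]
  nlinarith

end Real

/-- For `0 < x < 1` one has `1/Γ(x) ≤ (x² + x)/(x² + 1) < 1`;
in particular `1/Γ(x) < 1` for all `x ∈ (0,1)`. -/
theorem one_div_gamma_lt_one (x : ℝ) (h0 : 0 < x) (h1 : x < 1) :
    1 / Real.Gamma x ≤ (x ^ 2 + x) / (x ^ 2 + 1) ∧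
      (x ^ 2 + x) / (x ^ 2 + 1) < 1 ∧
      1 / Real.Gamma x < 1 := by
  have hΓ := sq_add_one_div_le_Gamma_add_one h0.le h1.le
  rw [Gamma_add_one h0.ne', div_le_iff₀ (by positivity)] at hΓ
  have hle : 1 / Gamma x ≤ (x ^ 2 + x) / (x ^ 2 + 1) := by
    rw [div_le_div_iff₀ (Gamma_pos_of_pos h0) (by positivity)]
    nlinarith
  have hlt : (x ^ 2 + x) / (x ^ 2 + 1) < 1 := by
    rw [div_lt_one (by positivity)]
    linarith
  exact ⟨hle, hlt, hle.trans_lt hlt⟩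
end

section
/- Let a < b, let n ∈ ℕ with n ≥ 2, and let α : [a,b] × [a,b] → ℝ be measurable with 1/n < α(t,τ) < 1 for all t, τ ∈ [a,b]. Then ∫_a^b ∫_a^t (t−τ)^{α(t,τ)−1} / Γ(α(t,τ)) dτ dt < (b−a) · ((b+a)/2 − 1 + n − a). -/
open MeasureTheory Set intervalIntegral
open scoped Interval

/-!
Since `Γ ≥ 1` on `(0, 1]` and `1/n < α ≤ 1`, the kernel `s ^ (α - 1) / Γ(α)` at `s = t - τ` is
at most `max (s ^ (1/n - 1)) 1`. Integrating this majorant over `s ∈ [0, t - a]` gives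
`n · min (t - a) 1 ^ (1/n) + max (t - a - 1) 0`, which by Bernoulli's inequality
`x ^ (1/n) ≤ 1 + (x - 1)/n` is at most `t - a + n - 1`, with strict inequality at `t = a`. Both
bounds are continuous in `t`, so integrating over `t ∈ [a, b]` keeps the inequality strict.
-/

/-- No integrability of `f` is needed: a non-integrable `f` has integral `0`. -/
theorem intervalIntegral.integral_mono_on_of_nonneg {μ : Measure ℝ} {f g : ℝ → ℝ} {a b : ℝ}
    (hab : a ≤ b) (hf : ∀ x ∈ Icc a b, 0 ≤ f x) (hg : IntervalIntegrable g μ a b)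
    (h : ∀ x ∈ Icc a b, f x ≤ g x) : ∫ x in a..b, f x ∂μ ≤ ∫ x in a..b, g x ∂μ := by
  rw [integral_of_le hab, integral_of_le hab]
  refine integral_mono_of_nonneg ?_ hg.1 ?_ <;>
    filter_upwards [ae_restrict_mem measurableSet_Ioc] with x hx
  exacts [hf x (Ioc_subset_Icc_self hx), h x (Ioc_subset_Icc_self hx)]

theorem Real.one_le_Gamma_of_mem_Ioc {x : ℝ} (hx : x ∈ Ioc 0 1) : 1 ≤ Real.Gamma x :=
  Real.Gamma_one ▸ Real.Gamma_strictAntiOn_Ioc.antitoneOn hx ⟨one_pos, le_rfl⟩ hx.2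

theorem Real.rpow_sub_one_le_max_rpow_sub_one_one {s p β : ℝ} (hs : 0 ≤ s) (hpβ : p ≤ β)
    (hβ : β ≤ 1) : s ^ (β - 1) ≤ max (s ^ (p - 1)) 1 := by
  rcases hs.eq_or_lt with rfl | hs
  · exact le_max_of_le_right (Real.zero_rpow_le_one _)
  rcases le_total s 1 with hs1 | hs1
  · exact le_max_of_le_left (Real.rpow_le_rpow_of_exponent_ge hs hs1 (by linarith))
  · exact le_max_of_le_right (Real.rpow_le_one_of_one_le_of_nonpos hs1 (by linarith))

theorem Real.rpow_sub_one_div_Gamma_nonneg {s β : ℝ} (hs : 0 ≤ s) (hβ : 0 < β) :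
    0 ≤ s ^ (β - 1) / Real.Gamma β :=
  div_nonneg (Real.rpow_nonneg hs _) (Real.Gamma_pos_of_pos hβ).le

theorem Real.rpow_sub_one_div_Gamma_le_max {s p β : ℝ} (hs : 0 ≤ s) (hp : 0 < p) (hpβ : p ≤ β)
    (hβ : β ≤ 1) : s ^ (β - 1) / Real.Gamma β ≤ max (s ^ (p - 1)) 1 :=
  (div_le_self (Real.rpow_nonneg hs _) (Real.one_le_Gamma_of_mem_Ioc ⟨hp.trans_le hpβ, hβ⟩)).trans
    (Real.rpow_sub_one_le_max_rpow_sub_one_one hs hpβ hβ)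

theorem intervalIntegrable_max_rpow_one {r : ℝ} (hr : -1 < r) (a b : ℝ) :
    IntervalIntegrable (fun s ↦ max (s ^ r) 1) volume a b :=
  have h := intervalIntegrable_rpow' hr (a := a) (b := b)
  have h1 := intervalIntegrable_const (μ := volume) (a := a) (b := b) (c := (1 : ℝ))
  ⟨h.1.sup h1.1, h.2.sup h1.2⟩

theorem integral_max_rpow_sub_one_one {p x : ℝ} (hp : 0 < p) (hp1 : p ≤ 1) (hx : 0 ≤ x) :
    ∫ s in 0..x, max (s ^ (p - 1)) 1 = min x 1 ^ p / p + max (x - 1) 0 := by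
  have hint := intervalIntegrable_max_rpow_one (r := p - 1) (by linarith)
  rw [← integral_add_adjacent_intervals (hint 0 (min x 1)) (hint (min x 1) x)]
  congr 1
  · have hpow : ∀ s ∈ Ι 0 (min x 1), max (s ^ (p - 1)) 1 = s ^ (p - 1) := fun s hs ↦ by
      rw [uIoc_of_le (le_min hx zero_le_one)] at hs
      exact max_eq_left (Real.one_le_rpow_of_pos_of_le_one_of_nonpos hs.1
        (hs.2.trans (min_le_right _ _)) (by linarith))
    rw [integral_congr_ae (ae_of_all _ hpow), integral_rpow (Or.inl (by linarith)),
      sub_add_cancel, Real.zero_rpow hp.ne', sub_zero]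
  · have hone : ∀ s ∈ Ι (min x 1) x, max (s ^ (p - 1)) 1 = 1 := fun s hs ↦ by
      rw [uIoc_of_le (min_le_left _ _)] at hs
      have h1s : 1 ≤ s := by
        rcases min_lt_iff.1 hs.1 with h | h <;> linarith [hs.2]
      exact max_eq_right (Real.rpow_le_one_of_one_le_of_nonpos h1s (by linarith))
    rw [integral_congr_ae (ae_of_all _ hone), intervalIntegral.integral_const, smul_eq_mul, mul_one]
    rcases le_total x 1 with hx1 | hx1 <;> simp [hx1]

theorem min_rpow_div_add_max_le {p x : ℝ} (hp : 0 < p) (hp1 : p ≤ 1) (hx : 0 ≤ x) :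
    min x 1 ^ p / p + max (x - 1) 0 ≤ x + 1 / p - 1 := by
  rcases le_total x 1 with hx1 | hx1
  · have bernoulli := rpow_one_add_le_one_add_mul_self (s := x - 1) (by linarith) hp.le hp1
    rw [add_sub_cancel] at bernoulli
    rw [min_eq_left hx1, max_eq_right (by linarith), add_zero, div_le_iff₀ hp]
    field_simp
    linarith
  · rw [min_eq_right hx1, max_eq_left (by linarith), Real.one_rpow]
    exact le_of_eq (by ring)

theorem integral_rpow_sub_one_div_Gamma_le {a t p : ℝ} {β : ℝ → ℝ} (hat : a ≤ t) (hp : 0 < p)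
    (hβ : ∀ τ ∈ Icc a t, p ≤ β τ ∧ β τ ≤ 1) :
    ∫ τ in a..t, (t - τ) ^ (β τ - 1) / Real.Gamma (β τ) ≤
      min (t - a) 1 ^ p / p + max (t - a - 1) 0 := by
  have hp1 : p ≤ 1 := (hβ a (left_mem_Icc.2 hat)).1.trans (hβ a (left_mem_Icc.2 hat)).2
  have hmaj : IntervalIntegrable (fun τ ↦ max ((t - τ) ^ (p - 1)) 1) volume a t := by
    simpa using (intervalIntegrable_max_rpow_one (by linarith) (t - a) 0).comp_sub_left t
  calc ∫ τ in a..t, (t - τ) ^ (β τ - 1) / Real.Gamma (β τ)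
      ≤ ∫ τ in a..t, max ((t - τ) ^ (p - 1)) 1 := by
        refine integral_mono_on_of_nonneg hat (fun τ hτ ↦ ?_) hmaj (fun τ hτ ↦ ?_)
        · exact Real.rpow_sub_one_div_Gamma_nonneg (sub_nonneg.2 hτ.2) (hp.trans_le (hβ τ hτ).1)
        · exact Real.rpow_sub_one_div_Gamma_le_max (sub_nonneg.2 hτ.2) hp (hβ τ hτ).1 (hβ τ hτ).2
    _ = ∫ s in 0..t - a, max (s ^ (p - 1)) 1 := by
        rw [integral_comp_sub_left (fun s ↦ max (s ^ (p - 1)) 1), sub_self]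
    _ = min (t - a) 1 ^ p / p + max (t - a - 1) 0 :=
        integral_max_rpow_sub_one_one hp hp1 (sub_nonneg.2 hat)

theorem integral_integral_rpow_sub_one_div_Gamma_lt {a b p : ℝ} (hab : a < b) (hp : 0 < p)
    (hp1 : p < 1) {α : ℝ → ℝ → ℝ}
    (hα : ∀ t ∈ Icc a b, ∀ τ ∈ Icc a b, p ≤ α t τ ∧ α t τ ≤ 1) :
    ∫ t in a..b, ∫ τ in a..t, (t - τ) ^ (α t τ - 1) / Real.Gamma (α t τ) <
      (b - a) * ((b + a) / 2 - 1 + 1 / p - a) := by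
  set H : ℝ → ℝ := fun x ↦ min x 1 ^ p / p + max (x - 1) 0
  have hH : Continuous H := by
    have := Real.continuous_rpow_const hp.le
    fun_prop
  have hαt : ∀ t ∈ Icc a b, ∀ τ ∈ Icc a t, p ≤ α t τ ∧ α t τ ≤ 1 :=
    fun t ht τ hτ ↦ hα t ht τ ⟨hτ.1, hτ.2.trans ht.2⟩
  calc ∫ t in a..b, ∫ τ in a..t, (t - τ) ^ (α t τ - 1) / Real.Gamma (α t τ)
      ≤ ∫ t in a..b, H (t - a) := by
        refine integral_mono_on_of_nonneg hab.le (fun t ht ↦ ?_)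
          ((hH.comp (continuous_sub_right a)).intervalIntegrable a b)
          (fun t ht ↦ integral_rpow_sub_one_div_Gamma_le ht.1 hp (hαt t ht))
        exact integral_nonneg ht.1 fun τ hτ ↦
          Real.rpow_sub_one_div_Gamma_nonneg (sub_nonneg.2 hτ.2) (hp.trans_le (hαt t ht τ hτ).1)
    _ < ∫ t in a..b, (t - a + 1 / p - 1) := by
        refine integral_lt_integral_of_continuousOn_of_le_of_exists_lt hab
          (hH.comp (continuous_sub_right a)).continuousOn (by fun_prop)
          (fun t ht ↦ min_rpow_div_add_max_le hp hp1.le (by linarith [ht.1]))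
          ⟨a, left_mem_Icc.2 hab.le, ?_⟩
        simpa [H, Real.zero_rpow hp.ne'] using (one_lt_inv₀ hp).2 hp1
    _ = (b - a) * ((b + a) / 2 - 1 + 1 / p - a) := by
        rw [integral_comp_sub_right (fun x ↦ x + 1 / p - 1)]
        simp
        ring

theorem kernel_double_integral_bound_general (a b : ℝ) (hab : a < b) (n : ℕ) (hn : 2 ≤ n)
    (α : ℝ → ℝ → ℝ)
    (hα : ∀ t ∈ Set.Icc a b, ∀ τ ∈ Set.Icc a b, 1 / (n : ℝ) < α t τ ∧ α t τ < 1) :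
    (∫ t in a..b, ∫ τ in a..t, (t - τ) ^ (α t τ - 1) / Real.Gamma (α t τ)) <
      (b - a) * ((b + a) / 2 - 1 + (n : ℝ) - a) := by
  have hn1 : (1 : ℝ) < n := by exact_mod_cast hn
  have h := integral_integral_rpow_sub_one_div_Gamma_lt hab (p := 1 / n) (by positivity)
    ((div_lt_one (by linarith)).2 hn1) fun t ht τ hτ ↦ ⟨(hα t ht τ hτ).1.le, (hα t ht τ hτ).2.le⟩
  rwa [one_div_one_div] at h

/-- Joint integral bound for the kernel of the left Riemann–Liouville integral of
variable order `α` with `1/n < α(t,τ) < 1` (`n ≥ 2`):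
`∫_a^b ∫_a^t (t−τ)^(α(t,τ)−1)/Γ(α(t,τ)) dτ dt < (b−a)·((b+a)/2 − 1 + n − a)`. -/
theorem kernel_double_integral_bound (a b : ℝ) (hab : a < b) (n : ℕ) (hn : 2 ≤ n)
    (α : ℝ → ℝ → ℝ) (hαm : Measurable (Function.uncurry α))
    (hα : ∀ t ∈ Set.Icc a b, ∀ τ ∈ Set.Icc a b, 1 / (n : ℝ) < α t τ ∧ α t τ < 1) :
    (∫ t in a..b, ∫ τ in a..t, (t - τ) ^ (α t τ - 1) / Real.Gamma (α t τ)) <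
      (b - a) * ((b + a) / 2 - 1 + (n : ℝ) - a) :=
  kernel_double_integral_bound_general a b hab n hn α hα
end
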